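/- Let (X_n)_{n≥1} be a sequence of real-valued random variables such that φ(u_k) and φ(v_k) are integrable for every k ≥ 0. Let φ : ℝ → ℝ be a nonnegative nondecreasing convex function with φ(0) = 0 for which there exists a real constant K > 0 such that φ(x + y) ≤ K(φ(x) + φ(y)) for all real x, y. Let χ be a positive nondecreasing function on (0,∞) with χ(b) → ∞ as b → ∞, and let (b_n)_{n≥1} be a nondecreasing unbounded sequence of positive real numbers. If Σ_{k=1}^∞ ( E[φ(u_k)] + E[φ(v_k)] − E[φ(u_{k−1})] − E[φ(v_{k−1})] ) / χ(b_k) < ∞, then φ(S_n)/χ(b_n) → 0 almost surely as n → ∞. -/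

import Mathlib

open MeasureTheory Filter Topology

/-!
With `T k = φ(u k) + φ(v k)`, which is nondecreasing in `k` and dominates `φ(S k)` because
`S k ≤ u k`, the hypothesis says that the nonnegative increments `(T (k+1) - T k) / χ(b (k+1))`
have summable expectations. Hence they are almost surely summable, and on that event a
Kronecker-type argument gives `T n / χ(b n) → 0`: splitting the increments of `T` at a fixed
index `m`, those beyond `m` contribute at most `χ(b n)` times a tail of the convergent series.
-/

section Kronecker

variable {T c : ℕ → ℝ}

lemma le_add_mul_sum_Ico_div_of_monotone (hT : Monotone T) (hc_pos : ∀ n, 0 < c n)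
    (hc : Monotone c) {m n : ℕ} (hmn : m ≤ n) :
    T n ≤ T m + c n * ∑ k ∈ Finset.Ico m n, (T (k + 1) - T k) / c (k + 1) := by
  induction n, hmn using Nat.le_induction with
  | base => simp
  | succ n hmn ih =>
    have h_incr : T (n + 1) - T n = c (n + 1) * ((T (n + 1) - T n) / c (n + 1)) :=
      (mul_div_cancel₀ _ (hc_pos (n + 1)).ne').symm
    have h_sum_nonneg : 0 ≤ ∑ k ∈ Finset.Ico m n, (T (k + 1) - T k) / c (k + 1) :=
      Finset.sum_nonneg fun k _ => div_nonneg (sub_nonneg.2 (hT k.le_succ)) (hc_pos _).le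
    have h_c : c n * ∑ k ∈ Finset.Ico m n, (T (k + 1) - T k) / c (k + 1)
        ≤ c (n + 1) * ∑ k ∈ Finset.Ico m n, (T (k + 1) - T k) / c (k + 1) :=
      mul_le_mul_of_nonneg_right (hc n.le_succ) h_sum_nonneg
    rw [Finset.sum_Ico_succ_top hmn, mul_add]
    linarith

theorem tendsto_div_of_summable_increments_div (hT : Monotone T) (hc_pos : ∀ n, 0 < c n)
    (hc : Monotone c) (hc_top : Tendsto c atTop atTop)
    (hsum : Summable fun k => (T (k + 1) - T k) / c (k + 1)) :
    Tendsto (fun n => T n / c n) atTop (𝓝 0) := by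
  set d : ℕ → ℝ := fun k => (T (k + 1) - T k) / c (k + 1)
  have h_tail : Tendsto (fun m => ∑' k, d k - ∑ k ∈ Finset.range m, d k) atTop (𝓝 0) := by
    simpa using (tendsto_const_nhds (x := ∑' k, d k)).sub hsum.hasSum.tendsto_sum_nat
  have h_const (m : ℕ) : Tendsto (fun n => T m / c n) atTop (𝓝 0) :=
    tendsto_const_nhds.div_atTop hc_top
  refine tendsto_order.2 ⟨fun a ha => ?_, fun a ha => ?_⟩
  · filter_upwards [(h_const 0).eventually (lt_mem_nhds ha)] with n hn
    exact hn.trans_le (div_le_div_of_nonneg_right (hT n.zero_le) (hc_pos n).le)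
  · obtain ⟨m, hm⟩ := (h_tail.eventually (gt_mem_nhds (half_pos ha))).exists
    filter_upwards [(h_const m).eventually (gt_mem_nhds (half_pos ha)), eventually_ge_atTop m]
      with n hn hmn
    have h_Ico : ∑ k ∈ Finset.Ico m n, d k ≤ ∑' k, d k - ∑ k ∈ Finset.range m, d k := by
      rw [Finset.sum_Ico_eq_sub _ hmn]
      gcongr
      exact hsum.sum_le_tsum _ fun k _ => div_nonneg (sub_nonneg.2 (hT k.le_succ)) (hc_pos _).le
    have h_key := le_add_mul_sum_Ico_div_of_monotone hT hc_pos hc hmn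
    calc T n / c n ≤ T m / c n + (∑' k, d k - ∑ k ∈ Finset.range m, d k) := by
          rw [div_add' _ _ _ (hc_pos n).ne', div_le_div_iff_of_pos_right (hc_pos n)]
          linarith [mul_le_mul_of_nonneg_left h_Ico (hc_pos n).le]
      _ < a / 2 + a / 2 := add_lt_add hn hm
      _ = a := add_halves a

end Kronecker

section Integrable

variable {Ω : Type*} [MeasurableSpace Ω] {μ : Measure Ω}

theorem ae_summable_of_summable_integral {Y : ℕ → Ω → ℝ} (h_nonneg : ∀ k, 0 ≤ᵐ[μ] Y k)
    (h_int : ∀ k, Integrable (Y k) μ) (h_sum : Summable fun k => ∫ ω, Y k ω ∂μ) :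
    ∀ᵐ ω ∂μ, Summable fun k => Y k ω := by
  have h_norm (k : ℕ) : ∫ ω, ‖Y k ω‖ ∂μ = ∫ ω, Y k ω ∂μ :=
    integral_congr_ae <| by filter_upwards [h_nonneg k] with ω h using Real.norm_of_nonneg h
  have h_ne_top : ∑' k, eLpNorm (Y k) 1 μ ≠ ⊤ := by
    simp_rw [eLpNorm_one_eq_lintegral_enorm, ← ofReal_integral_norm_eq_lintegral_enorm (h_int _),
      h_norm, ← ENNReal.ofReal_tsum_of_nonneg (fun k => integral_nonneg_of_ae (h_nonneg k)) h_sum]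
    exact ENNReal.ofReal_ne_top
  filter_upwards [summable_norm_of_tsum_eLpNorm_ne_top le_rfl
    (fun k => (h_int k).aestronglyMeasurable) h_ne_top] with ω h using h.of_norm

theorem ae_summable_increments_div {T : ℕ → Ω → ℝ} {w : ℕ → ℝ}
    (hT_int : ∀ k, Integrable (T k) μ) (hT_mono : ∀ ω, Monotone fun k => T k ω)
    (hw : ∀ k, 0 ≤ w k)
    (h_sum : Summable fun k => (∫ ω, T (k + 1) ω ∂μ - ∫ ω, T k ω ∂μ) / w k) :
    ∀ᵐ ω ∂μ, Summable fun k => (T (k + 1) ω - T k ω) / w k :=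
  ae_summable_of_summable_integral
    (fun k => ae_of_all _ fun ω => div_nonneg (sub_nonneg.2 (hT_mono ω k.le_succ)) (hw k))
    (fun k => ((hT_int _).sub (hT_int k)).div_const _)
    (h_sum.congr fun k => by rw [integral_div, integral_sub (hT_int _) (hT_int k)])

end Integrable

theorem monotone_sum_Icc_of_nonneg {M : Type*} [AddCommMonoid M] [PartialOrder M]
    [IsOrderedAddMonoid M] {f : ℕ → M} (hf : ∀ i, 0 ≤ f i) (a : ℕ) :
    Monotone fun k => ∑ i ∈ Finset.Icc a k, f i :=
  fun _ _ h => Finset.sum_mono_set_of_nonneg hf (Finset.Icc_subset_Icc_right h)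

theorem slln_arbitrary_random_variables_general
    {Ω : Type*} [MeasurableSpace Ω] (μ : Measure Ω)
    (X S u v : ℕ → Ω → ℝ)
    (hS : ∀ k ω, S k ω = ∑ i ∈ Finset.Icc 1 k, X i ω)
    (hu : ∀ k ω, u k ω = ∑ i ∈ Finset.Icc 1 k, max (X i ω) 0)
    (hv : ∀ k ω, v k ω = ∑ i ∈ Finset.Icc 1 k, max (-(X i ω)) 0)
    (φ : ℝ → ℝ)
    (hφ_nonneg : ∀ x, 0 ≤ φ x)
    (hφ_mono : Monotone φ)
    (hu_int : ∀ k, Integrable (fun ω => φ (u k ω)) μ)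
    (hv_int : ∀ k, Integrable (fun ω => φ (v k ω)) μ)
    (χ : ℝ → ℝ)
    (hχ_pos : ∀ b : ℝ, 0 < b → 0 < χ b)
    (hχ_mono : ∀ a b : ℝ, 0 < a → a ≤ b → χ a ≤ χ b)
    (hχ_top : Tendsto χ atTop atTop)
    (b : ℕ → ℝ)
    (hb_pos : ∀ n, 1 ≤ n → 0 < b n)
    (hb_mono : ∀ n, 1 ≤ n → b n ≤ b (n + 1))
    (hb_top : Tendsto b atTop atTop)
    (h_sum : Summable (fun k : ℕ =>
        ((∫ ω, φ (u (k + 1) ω) ∂μ) + (∫ ω, φ (v (k + 1) ω) ∂μ)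
          - (∫ ω, φ (u k ω) ∂μ) - (∫ ω, φ (v k ω) ∂μ)) / χ (b (k + 1)))) :
    ∀ᵐ ω ∂μ, Tendsto (fun n => φ (S n ω) / χ (b n)) atTop (nhds 0) := by
  set T : ℕ → Ω → ℝ := fun k ω => φ (u k ω) + φ (v k ω)
  have hT_int (k : ℕ) : Integrable (T k) μ := (hu_int k).add (hv_int k)
  have hT_mono (ω : Ω) : Monotone fun k => T k ω := by
    have hu_mono : Monotone fun k => u k ω := by
      simpa only [hu] using monotone_sum_Icc_of_nonneg (fun i => le_max_right (X i ω) 0) 1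
    have hv_mono : Monotone fun k => v k ω := by
      simpa only [hv] using monotone_sum_Icc_of_nonneg (fun i => le_max_right (-X i ω) 0) 1
    exact (hφ_mono.comp hu_mono).add (hφ_mono.comp hv_mono)
  have hc_pos (n : ℕ) : 0 < χ (b (n + 1)) := hχ_pos _ (hb_pos _ n.succ_pos)
  have hc_mono : Monotone fun n => χ (b (n + 1)) :=
    monotone_nat_of_le_succ fun n => hχ_mono _ _ (hb_pos _ n.succ_pos) (hb_mono _ n.succ_pos)
  have hc_top : Tendsto (fun n => χ (b (n + 1))) atTop atTop :=
    hχ_top.comp (hb_top.comp (tendsto_add_atTop_nat 1))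
  have h_ae := ae_summable_increments_div hT_int hT_mono (fun k => (hc_pos k).le)
    (h_sum.congr fun k => by
      rw [integral_add (hu_int _) (hv_int _), integral_add (hu_int k) (hv_int k)]
      ring)
  filter_upwards [h_ae] with ω hω
  have hT_lim : Tendsto (fun n => T (n + 1) ω / χ (b (n + 1))) atTop (𝓝 0) :=
    tendsto_div_of_summable_increments_div ((hT_mono ω).comp fun _ _ h => by omega) hc_pos
      hc_mono hc_top ((summable_nat_add_iff 1).2 hω)
  have hS_le (n : ℕ) : φ (S n ω) ≤ T n ω := by
    have h : S n ω ≤ u n ω := by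
      rw [hS, hu]
      exact Finset.sum_le_sum fun i _ => le_max_left _ _
    exact le_add_of_le_of_nonneg (hφ_mono h) (hφ_nonneg _)
  refine (tendsto_add_atTop_iff_nat 1).1 (squeeze_zero (fun n => ?_) (fun n => ?_) hT_lim)
  · exact div_nonneg (hφ_nonneg _) (hc_pos n).le
  · exact div_le_div_of_nonneg_right (hS_le _) (hc_pos n).le

/-- **Strong law of large numbers for arbitrary random variables**
(Theorem 3.2 of Ndiaye–Lo). Here `S n = Σ_{i=1}^n X_i`, `u n = Σ_{i=1}^n X_i⁺`,
`v n = Σ_{i=1}^n X_i⁻`. -/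
theorem slln_arbitrary_random_variables
    {Ω : Type*} [MeasurableSpace Ω] (μ : Measure Ω) [IsProbabilityMeasure μ]
    (X S u v : ℕ → Ω → ℝ)
    (hXmeas : ∀ i, 1 ≤ i → Measurable (X i))
    (hS : ∀ k ω, S k ω = ∑ i ∈ Finset.Icc 1 k, X i ω)
    (hu : ∀ k ω, u k ω = ∑ i ∈ Finset.Icc 1 k, max (X i ω) 0)
    (hv : ∀ k ω, v k ω = ∑ i ∈ Finset.Icc 1 k, max (-(X i ω)) 0)
    (φ : ℝ → ℝ)
    (hφ_nonneg : ∀ x, 0 ≤ φ x)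
    (hφ_mono : Monotone φ)
    (hφ_convex : ConvexOn ℝ Set.univ φ)
    (hφ_zero : φ 0 = 0)
    (K : ℝ) (hK : 0 < K)
    (hφ_subadd : ∀ x y : ℝ, φ (x + y) ≤ K * (φ x + φ y))
    (hu_int : ∀ k, Integrable (fun ω => φ (u k ω)) μ)
    (hv_int : ∀ k, Integrable (fun ω => φ (v k ω)) μ)
    (χ : ℝ → ℝ)
    (hχ_pos : ∀ b : ℝ, 0 < b → 0 < χ b)
    (hχ_mono : ∀ a b : ℝ, 0 < a → a ≤ b → χ a ≤ χ b)
    (hχ_top : Tendsto χ atTop atTop)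
    (b : ℕ → ℝ)
    (hb_pos : ∀ n, 1 ≤ n → 0 < b n)
    (hb_mono : ∀ n, 1 ≤ n → b n ≤ b (n + 1))
    (hb_top : Tendsto b atTop atTop)
    (h_sum : Summable (fun k : ℕ =>
        ((∫ ω, φ (u (k + 1) ω) ∂μ) + (∫ ω, φ (v (k + 1) ω) ∂μ)
          - (∫ ω, φ (u k ω) ∂μ) - (∫ ω, φ (v k ω) ∂μ)) / χ (b (k + 1)))) :
    ∀ᵐ ω ∂μ, Tendsto (fun n => φ (S n ω) / χ (b n)) atTop (nhds 0) :=
  slln_arbitrary_random_variables_general μ X S u v hS hu hv φ hφ_nonneg hφ_mono hu_int hv_int χ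
    hχ_pos hχ_mono hχ_top b hb_pos hb_mono hb_top h_sum
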